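/- arXiv:1609.08978 — 5 statements merged into one kernel-verified Lean document; each statement's English description precedes it below -/
import Mathlib

section
/- Let N ≥ 2 and n ≥ 1. For every m ∈ S^{(n)}_{N−1} and every pair of distinct indices i, j with m_j ≥ 1, the coagulation–fragmentation transition matrix satisfies P(m, m + e_i − e_j) > 0, where e_i, e_j are standard basis vectors; that is, the chain can move in one step to any state at ℓ¹-distance 2 from the current state. -/
open Finset

/-- The coagulation–fragmentation transition matrix on the discrete simplex
`S^{(n)}_{N-1} = {m ∈ ℕ^N : ∑ m i = n}`:
`P(m, m') = ∑_{(i,j) : i ≠ j} (1/(N(N-1))) [ 1{m_i+m_j ≥ 1 ∧ m'_j ≥ 1}/(m_i+m_j)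
  + 1{m_i+m_j = 0} ] · 1{m'_i+m'_j = m_i+m_j} · ∏_{k ≠ i,j} 1{m'_k = m_k}`. -/
noncomputable def cfP (N : ℕ) (m m' : Fin N → ℕ) : ℝ :=
  ∑ p ∈ Finset.univ.filter (fun p : Fin N × Fin N => p.1 ≠ p.2),
    (1 / ((N : ℝ) * ((N : ℝ) - 1))) *
      ((if 1 ≤ m p.1 + m p.2 ∧ 1 ≤ m' p.2 then (1 : ℝ) / ((m p.1 + m p.2 : ℕ) : ℝ) else 0) +
        (if m p.1 + m p.2 = 0 then (1 : ℝ) else 0)) *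
      (if m' p.1 + m' p.2 = m p.1 + m p.2 then (1 : ℝ) else 0) *
      ∏ k ∈ Finset.univ.filter (fun k => k ≠ p.1 ∧ k ≠ p.2),
        (if m' k = m k then (1 : ℝ) else 0)

/-- For every `m ∈ S^{(n)}_{N-1}` and distinct indices `i, j` with `m j ≥ 1`, the
coagulation–fragmentation transition matrix satisfies `P(m, m + e_i - e_j) > 0`:
the chain can move in one step to any state at `ℓ¹`-distance `2` from the current one. -/
theorem cfP_neighbour_pos (N n : ℕ) (hN : 2 ≤ N) (hn : 1 ≤ n)
    (m : Fin N → ℕ) (hm : m ∈ Finset.Nat.antidiagonalTuple N n)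
    (i j : Fin N) (hij : i ≠ j) (hj : 1 ≤ m j) :
    0 < cfP N m (Function.update (Function.update m i (m i + 1)) j (m j - 1)) := by
  set m' := Function.update (Function.update m i (m i + 1)) j (m j - 1) with hm'def
  have hNr : (0:ℝ) < (N:ℝ) * ((N:ℝ) - 1) := by
    have h2 : (2:ℝ) ≤ (N:ℝ) := by exact_mod_cast hN
    nlinarith
  have hmi' : m' i = m i + 1 := by
    simp [hm'def, Function.update_apply, hij, hij.symm]
  have hmj' : m' j = m j - 1 := by simp [hm'def]
  unfold cfP
  apply Finset.sum_pos'
  · intro p _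
    apply mul_nonneg
    apply mul_nonneg
    apply mul_nonneg
    · positivity
    · apply add_nonneg <;> (split_ifs <;> positivity)
    · split_ifs <;> norm_num
    · apply Finset.prod_nonneg; intro k _; split_ifs <;> norm_num
  · refine ⟨(j, i), Finset.mem_filter.mpr ⟨Finset.mem_univ _, hij.symm⟩, ?_⟩
    simp only
    have h1 : 1 ≤ m j + m i ∧ 1 ≤ m' i := ⟨le_trans hj (Nat.le_add_right _ _), by omega⟩
    have h2 : m' j + m' i = m j + m i := by omega
    rw [if_pos h1, if_neg (by omega), if_pos h2]
    refine mul_pos (mul_pos (mul_pos (by positivity) ?_) one_pos) ?_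
    · have : (0:ℝ) < ((m j + m i : ℕ) : ℝ) := by exact_mod_cast (by omega : 0 < m j + m i)
      positivity
    · apply Finset.prod_pos
      intro k hk
      obtain ⟨-, hk1, hk2⟩ := Finset.mem_filter.mp hk
      rw [if_pos]
      · exact one_pos
      · simp [hm'def, Function.update_apply, hk1, hk2]
end

section
/- Let N ≥ 2 and n ≥ 1. The Markov chain on S^{(n)}_{N−1} with coagulation–fragmentation transition matrix P is irreducible: for all m, m′ ∈ S^{(n)}_{N−1} there exists k ≥ 1 with P^k(m, m′) > 0. -/
open Finset

/-- The `k`-step transition matrix of the coagulation–fragmentation chain on the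
discrete simplex `S^{(n)}_{N-1}`. -/
noncomputable def cfPpow (N n : ℕ) : ℕ → (Fin N → ℕ) → (Fin N → ℕ) → ℝ
  | 0, m, m' => if m = m' then 1 else 0
  | k + 1, m, m' => ∑ mm ∈ Finset.Nat.antidiagonalTuple N n, cfPpow N n k m mm * cfP N mm m'

lemma cfP_nonneg (N : ℕ) (m m' : Fin N → ℕ) : 0 ≤ cfP N m m' := by
  apply Finset.sum_nonneg
  intro p _
  have h0 : (0:ℝ) ≤ 1 / ((N:ℝ) * ((N:ℝ) - 1)) := by
    rcases Nat.eq_zero_or_pos N with h | h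
    · simp [h]
    · apply div_nonneg zero_le_one
      apply mul_nonneg (Nat.cast_nonneg N)
      have : (1:ℝ) ≤ N := by exact_mod_cast h
      linarith
  refine mul_nonneg (mul_nonneg (mul_nonneg h0 ?_) ?_) ?_
  · apply add_nonneg <;> split_ifs <;> positivity
  · split_ifs <;> norm_num
  · apply Finset.prod_nonneg; intro k _; split_ifs <;> norm_num

lemma cfPpow_nonneg (N n : ℕ) : ∀ (k : ℕ) (m m' : Fin N → ℕ), 0 ≤ cfPpow N n k m m' := by
  intro k
  induction k with
  | zero =>
    intro m m'
    simp only [cfPpow]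
    split_ifs <;> norm_num
  | succ k ih =>
    intro m m'
    simp only [cfPpow]
    exact Finset.sum_nonneg fun mm _ => mul_nonneg (ih m mm) (cfP_nonneg N mm m')

/-- One-step positivity for an elementary coagulation–fragmentation move. -/
lemma cfP_pos_of_move (N : ℕ) (hN : 2 ≤ N) (i j : Fin N) (hij : i ≠ j)
    (m m' : Fin N → ℕ) (ht : 1 ≤ m i + m j) (hj : 1 ≤ m' j)
    (hsum : m' i + m' j = m i + m j)
    (hoth : ∀ k, k ≠ i → k ≠ j → m' k = m k) : 0 < cfP N m m' := by
  unfold cfP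
  apply Finset.sum_pos'
  · intro p _
    have h0 : (0:ℝ) ≤ 1 / ((N:ℝ) * ((N:ℝ) - 1)) := by
      apply div_nonneg zero_le_one
      apply mul_nonneg (Nat.cast_nonneg N)
      have : (2:ℝ) ≤ N := by exact_mod_cast hN
      linarith
    refine mul_nonneg (mul_nonneg (mul_nonneg h0 ?_) ?_) ?_
    · apply add_nonneg <;> split_ifs <;> positivity
    · split_ifs <;> norm_num
    · apply Finset.prod_nonneg; intro k _; split_ifs <;> norm_num
  · refine ⟨(i, j), ?_, ?_⟩
    · simp [hij]
    · dsimp only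
      have hprod : (∏ k ∈ Finset.univ.filter (fun k => k ≠ i ∧ k ≠ j),
          (if m' k = m k then (1 : ℝ) else 0)) = 1 := by
        apply Finset.prod_eq_one
        intro k hk
        simp only [Finset.mem_filter] at hk
        rw [hoth k hk.2.1 hk.2.2]
        simp
      have h1 : (0:ℝ) < (N:ℝ) * ((N:ℝ) - 1) := by
        have : (2:ℝ) ≤ N := by exact_mod_cast hN
        nlinarith
      have h2 : (0:ℝ) < ((m i + m j : ℕ) : ℝ) := by
        exact_mod_cast Nat.lt_of_lt_of_le Nat.zero_lt_one ht
      rw [hprod, if_pos (⟨ht, hj⟩ : 1 ≤ m i + m j ∧ 1 ≤ m' j),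
        if_neg (by omega : ¬ (m i + m j = 0)),
        if_pos hsum]
      have := one_div_pos.mpr h1
      have := one_div_pos.mpr h2
      nlinarith
  
lemma exists_pos_of_sum_pos {α : Type*} {s : Finset α} {f : α → ℝ}
    (h : 0 < ∑ x ∈ s, f x) : ∃ x ∈ s, 0 < f x := by
  by_contra hc
  push_neg at hc
  have := Finset.sum_nonpos hc
  linarith

lemma cfPpow_trans (N n : ℕ) (y : Fin N → ℕ) :
    ∀ (b a : ℕ) (x z : Fin N → ℕ), 0 < cfPpow N n a x y → 0 < cfPpow N n b y z →
      0 < cfPpow N n (a + b) x z := by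
  intro b
  induction b with
  | zero =>
    intro a x z h1 h2
    have hyz : y = z := by
      by_contra h
      simp [cfPpow, h] at h2
    subst hyz
    simpa using h1
  | succ b ih =>
    intro a x z h1 h2
    simp only [cfPpow] at h2
    obtain ⟨mm, hmm, hpos⟩ := exists_pos_of_sum_pos h2
    have hb : 0 < cfPpow N n b y mm ∧ 0 < cfP N mm z := by
      rcases mul_pos_iff.mp hpos with ⟨h3, h4⟩ | ⟨h3, h4⟩
      · exact ⟨h3, h4⟩
      · exact absurd h4 (not_lt.mpr (cfP_nonneg N mm z))
    have hxm : 0 < cfPpow N n (a + b) x mm := ih a x mm h1 hb.1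
    show 0 < cfPpow N n ((a + b) + 1) x z
    simp only [cfPpow]
    exact Finset.sum_pos'
      (fun mm' _ => mul_nonneg (cfPpow_nonneg N n _ x mm') (cfP_nonneg N mm' z))
      ⟨mm, hmm, mul_pos hxm hb.2⟩

lemma cfPpow_one_of_cfP_pos (N n : ℕ) (m m' : Fin N → ℕ)
    (hm : m ∈ Finset.Nat.antidiagonalTuple N n) (h : 0 < cfP N m m') :
    0 < cfPpow N n 1 m m' := by
  show 0 < cfPpow N n (0 + 1) m m'
  simp only [cfPpow]
  refine Finset.sum_pos'
    (fun mm' _ => mul_nonneg (cfPpow_nonneg N n 0 m mm') (cfP_nonneg N mm' m'))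
    ⟨m, hm, ?_⟩
  simpa using h

/-- The concentrated state: all mass at coordinate `0`. -/
def cstate (N n : ℕ) : Fin N → ℕ := fun i => if (i : ℕ) = 0 then n else 0

lemma cstate_sum (N n : ℕ) (hN : 2 ≤ N) : ∑ i, cstate N n i = n := by
  have hz : (⟨0, by omega⟩ : Fin N) ∈ Finset.univ := Finset.mem_univ _
  have : ∀ i : Fin N, cstate N n i = if i = ⟨0, by omega⟩ then n else 0 := by
    intro i
    unfold cstate
    congr 1
    simp [Fin.ext_iff]
  rw [Finset.sum_congr rfl (fun i _ => this i)]
  simp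

lemma cstate_mem (N n : ℕ) (hN : 2 ≤ N) :
    cstate N n ∈ Finset.Nat.antidiagonalTuple N n :=
  Finset.Nat.mem_antidiagonalTuple.mpr (cstate_sum N n hN)

/-- Every state is connected to and from the concentrated state. -/
lemma cfP_conc (N n : ℕ) (hN : 2 ≤ N) :
    ∀ m : Fin N → ℕ, (∑ i, m i = n) →
      (∃ k, 0 < cfPpow N n k m (cstate N n)) ∧ (∃ k, 0 < cfPpow N n k (cstate N n) m) := by
  suffices H : ∀ d (m : Fin N → ℕ), (∑ i ∈ Finset.univ.filter (fun i : Fin N => (i : ℕ) ≠ 0), m i = d) →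
      (∑ i, m i = n) →
      (∃ k, 0 < cfPpow N n k m (cstate N n)) ∧ (∃ k, 0 < cfPpow N n k (cstate N n) m) by
    intro m hsum
    exact H _ m rfl hsum
  intro d
  induction d using Nat.strong_induction_on with
  | _ d ih =>
    intro m hd hsum
    rcases Nat.eq_zero_or_pos d with hd0 | hdpos
    · -- m = cstate
      subst hd0
      have hzero : ∀ i ∈ Finset.univ.filter (fun i : Fin N => (i : ℕ) ≠ 0), m i = 0 :=
        (Finset.sum_eq_zero_iff).mp hd
      have hmc : m = cstate N n := by
        funext i
        unfold cstate
        by_cases hi : (i : ℕ) = 0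
        · rw [if_pos hi]
          have hkey := Finset.add_sum_erase Finset.univ m (Finset.mem_univ i)
          have herase : ∑ x ∈ Finset.univ.erase i, m x = 0 := by
            apply Finset.sum_eq_zero
            intro x hx
            apply hzero
            simp only [Finset.mem_filter, Finset.mem_univ, true_and]
            intro hx0
            have : x = i := Fin.ext (by omega)
            exact (Finset.mem_erase.mp hx).1 this
          omega
        · rw [if_neg hi]
          exact hzero i (by simp [hi])
      rw [hmc]
      have : 0 < cfPpow N n 0 (cstate N n) (cstate N n) := by simp [cfPpow]
      exact ⟨⟨0, this⟩, ⟨0, this⟩⟩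
    · -- there is i ≠ 0 with m i ≥ 1
      have hex : ∃ i ∈ Finset.univ.filter (fun i : Fin N => (i : ℕ) ≠ 0), 1 ≤ m i := by
        by_contra hc
        push_neg at hc
        have : ∑ i ∈ Finset.univ.filter (fun i : Fin N => (i : ℕ) ≠ 0), m i = 0 :=
          Finset.sum_eq_zero fun i hi => by have := hc i hi; omega
        omega
      obtain ⟨i, hi, hmi⟩ := hex
      simp only [Finset.mem_filter, Finset.mem_univ, true_and] at hi
      set z : Fin N := ⟨0, by omega⟩ with hzdef
      have hiz : i ≠ z := by simp [Fin.ext_iff, hzdef, hi]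
      set m₁ : Fin N → ℕ := fun k => if k = i then 0 else if k = z then m z + m i else m k
        with hm₁def
      have hm₁i : m₁ i = 0 := by simp [hm₁def]
      have hm₁z : m₁ z = m z + m i := by simp [hm₁def, Ne.symm hiz]
      have hm₁o : ∀ k, k ≠ i → k ≠ z → m₁ k = m k := by
        intro k h1 h2; simp [hm₁def, h1, h2]
      -- sums
      have hmem_i : i ∈ Finset.univ.erase z := Finset.mem_erase.mpr ⟨hiz, Finset.mem_univ i⟩
      have key : ∀ f : Fin N → ℕ, ∑ x ∈ Finset.univ, f x
          = f z + (f i + ∑ x ∈ (Finset.univ.erase z).erase i, f x) := by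
        intro f
        rw [← Finset.add_sum_erase Finset.univ f (Finset.mem_univ z),
          ← Finset.add_sum_erase _ f hmem_i]
      have hrest : ∑ x ∈ (Finset.univ.erase z).erase i, m₁ x
          = ∑ x ∈ (Finset.univ.erase z).erase i, m x := by
        apply Finset.sum_congr rfl
        intro x hx
        have hx1 := (Finset.mem_erase.mp hx).1
        have hx2 := (Finset.mem_erase.mp (Finset.mem_erase.mp hx).2).1
        exact hm₁o x hx1 hx2
      have hsum₁ : ∑ x, m₁ x = n := by
        rw [key m₁, hrest, hm₁i, hm₁z]
        rw [key m] at hsum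
        omega
      have hmem₁ : m₁ ∈ Finset.Nat.antidiagonalTuple N n :=
        Finset.Nat.mem_antidiagonalTuple.mpr hsum₁
      have hmemm : m ∈ Finset.Nat.antidiagonalTuple N n :=
        Finset.Nat.mem_antidiagonalTuple.mpr hsum
      -- the measure decreases
      have keyf : ∀ f : Fin N → ℕ,
          ∑ x ∈ Finset.univ.filter (fun i : Fin N => (i : ℕ) ≠ 0), f x
          = f i + ∑ x ∈ (Finset.univ.filter (fun i : Fin N => (i : ℕ) ≠ 0)).erase i, f x := by
        intro f
        rw [← Finset.add_sum_erase _ f (Finset.mem_filter.mpr ⟨Finset.mem_univ i, hi⟩)]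
      have hrestf : ∑ x ∈ (Finset.univ.filter (fun i : Fin N => (i : ℕ) ≠ 0)).erase i, m₁ x
          = ∑ x ∈ (Finset.univ.filter (fun i : Fin N => (i : ℕ) ≠ 0)).erase i, m x := by
        apply Finset.sum_congr rfl
        intro x hx
        have hx1 := (Finset.mem_erase.mp hx).1
        have hx2 : (x : ℕ) ≠ 0 := by
          have := (Finset.mem_filter.mp (Finset.mem_erase.mp hx).2).2
          exact this
        have hxz : x ≠ z := by simp [Fin.ext_iff, hzdef, hx2]
        exact hm₁o x hx1 hxz
      have hd₁ : ∑ x ∈ Finset.univ.filter (fun i : Fin N => (i : ℕ) ≠ 0), m₁ x < d := by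
        rw [keyf m₁, hrestf, hm₁i]
        rw [keyf m] at hd
        omega
      -- single steps
      have hstep₁ : 0 < cfP N m m₁ := by
        apply cfP_pos_of_move N hN i z hiz m m₁ (by omega) (by omega)
        · omega
        · exact hm₁o
      have hstep₂ : 0 < cfP N m₁ m := by
        apply cfP_pos_of_move N hN z i (Ne.symm hiz) m₁ m (by omega) hmi
        · omega
        · intro k h1 h2
          exact (hm₁o k h2 h1).symm
      obtain ⟨⟨k1, hk1⟩, ⟨k2, hk2⟩⟩ := ih _ hd₁ m₁ rfl hsum₁
      constructor
      · exact ⟨1 + k1, cfPpow_trans N n m₁ k1 1 m (cstate N n)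
          (cfPpow_one_of_cfP_pos N n m m₁ hmemm hstep₁) hk1⟩
      · exact ⟨k2 + 1, cfPpow_trans N n m₁ 1 k2 (cstate N n) m hk2
          (cfPpow_one_of_cfP_pos N n m₁ m hmem₁ hstep₂)⟩

/-- The coagulation–fragmentation Markov chain on `S^{(n)}_{N-1}` is irreducible: for all
states `m, m'` there is `k ≥ 1` with `P^k(m, m') > 0`. -/
theorem cfP_irreducible (N n : ℕ) (hN : 2 ≤ N) (hn : 1 ≤ n)
    (m m' : Fin N → ℕ) (hm : m ∈ Finset.Nat.antidiagonalTuple N n)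
    (hm' : m' ∈ Finset.Nat.antidiagonalTuple N n) :
    ∃ k : ℕ, 1 ≤ k ∧ 0 < cfPpow N n k m m' := by
  have hsm := Finset.Nat.mem_antidiagonalTuple.mp hm
  have hsm' := Finset.Nat.mem_antidiagonalTuple.mp hm'
  -- self loop at m
  have hself : 0 < cfP N m m := by
    have hex : ∃ j, 1 ≤ m j := by
      by_contra hc
      push_neg at hc
      have : ∑ i, m i = 0 := Finset.sum_eq_zero fun i _ => by have := hc i; omega
      omega
    obtain ⟨j, hj⟩ := hex
    have hex2 : ∃ i : Fin N, i ≠ j := by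
      by_cases hj0 : (j : ℕ) = 0
      · exact ⟨⟨1, by omega⟩, by simp [Fin.ext_iff, hj0]⟩
      · exact ⟨⟨0, by omega⟩, by simp [Fin.ext_iff]; omega⟩
    obtain ⟨i, hij⟩ := hex2
    exact cfP_pos_of_move N hN i j hij m m (by omega) hj rfl (fun _ _ _ => rfl)
  have hself1 : 0 < cfPpow N n 1 m m := cfPpow_one_of_cfP_pos N n m m hm hself
  obtain ⟨⟨k1, hk1⟩, _⟩ := cfP_conc N n hN m hsm
  obtain ⟨_, ⟨k2, hk2⟩⟩ := cfP_conc N n hN m' hsm'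
  have h1 : 0 < cfPpow N n (1 + k1) m (cstate N n) :=
    cfPpow_trans N n m k1 1 m (cstate N n) hself1 hk1
  have h2 : 0 < cfPpow N n ((1 + k1) + k2) m m' :=
    cfPpow_trans N n (cstate N n) k2 (1 + k1) m m' h1 hk2
  exact ⟨(1 + k1) + k2, by omega, h2⟩
end

section
/- Let N ≥ 2. For each n ≥ 1 let μ_0^{(n)} be a probability measure on the scaled discrete simplex Δ_{N−1}(n) ⊆ Δ_{N−1}, and let μ_0 be a probability measure on Δ_{N−1}. If μ_0^{(n)} converges weakly to μ_0 as n → ∞, then for every k ∈ ℕ the time-k marginal μ_0^{(n)} P_n^k of the scaled discrete coagulation–fragmentation chain converges weakly, as n → ∞, to the time-k marginal μ_0 K^k of the continuous coagulation–fragmentation chain. -/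
open MeasureTheory Filter
open scoped ENNReal NNReal Topology

/-- The coagulation–fragmentation map `T_{i,j,u}` on `ℝ^N`: the `i`-th coordinate of the
output is `u (x_i + x_j)`, the `j`-th coordinate is `(1-u)(x_i + x_j)`, and all other
coordinates are unchanged. -/
noncomputable def cfT (N : ℕ) (i j : Fin N) (u : ℝ) (x : Fin N → ℝ) : Fin N → ℝ :=
  Function.update (Function.update x i (u * (x i + x j))) j ((1 - u) * (x i + x j))

/-- The coagulation–fragmentation kernel on the simplex `Δ_{N-1}`, viewed as a
measure-valued map: `K(x, A) = (1/(N(N-1))) ∑_{(i,j) : i ≠ j} Leb{u ∈ [0,1] : T_{i,j,u}(x) ∈ A}`. -/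
noncomputable def cfK (N : ℕ) (x : Fin N → ℝ) : Measure (Fin N → ℝ) :=
  ((N : ℝ≥0∞) * ((N : ℝ≥0∞) - 1))⁻¹ •
    ∑ p ∈ Finset.univ.filter (fun p : Fin N × Fin N => p.1 ≠ p.2),
      (volume.restrict (Set.Icc (0 : ℝ) 1)).map (fun u => cfT N p.1 p.2 u x)

/-- The uniform distribution on the simplex `Δ_{N-1}`: the `(N-1)`-dimensional Hausdorff
measure restricted to `Δ_{N-1}` and normalized to be a probability measure. -/
noncomputable def uniformSimplex (N : ℕ) : Measure (Fin N → ℝ) :=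
  (μH[(N : ℝ) - 1] (stdSimplex ℝ (Fin N)))⁻¹ •
    μH[(N : ℝ) - 1].restrict (stdSimplex ℝ (Fin N))

/-- Iterated action of a (measure-valued) Markov transition `κ` on an initial
distribution: `evolve κ k μ = μ κ^k` is the time-`k` marginal of the chain with initial
distribution `μ` and transition kernel `κ`. -/
noncomputable def evolve {α : Type*} [MeasurableSpace α] (κ : α → Measure α) :
    ℕ → Measure α → Measure α
  | 0, μ => μ
  | k + 1, μ => (evolve κ k μ).bind κ

/-- The scaled discrete simplex `Δ_{N-1}(n) = {x ∈ Δ_{N-1} : n x_i ∈ ℕ for all i}`. -/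
def discSimplex (N n : ℕ) : Set (Fin N → ℝ) :=
  {x ∈ stdSimplex ℝ (Fin N) | ∀ i, ∃ k : ℕ, x i = (k : ℝ) / n}

/-- One step of the scaled discrete coagulation–fragmentation chain on `Δ_{N-1}(n)`,
viewed as a measure-valued map on `ℝ^N`: an ordered pair `(i,j)` of distinct indices is
chosen uniformly; if `y_i + y_j ≥ 1/n` the `i`-th coordinate is replaced by `k/n` with `k`
uniform on `{0, …, n(y_i+y_j)-1}` and the `j`-th coordinate by `y_i + y_j - k/n`; if
`y_i + y_j = 0` the state is unchanged. -/
noncomputable def cfKd (N n : ℕ) (y : Fin N → ℝ) : Measure (Fin N → ℝ) :=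
  ((N : ℝ≥0∞) * ((N : ℝ≥0∞) - 1))⁻¹ •
    ∑ p ∈ Finset.univ.filter (fun p : Fin N × Fin N => p.1 ≠ p.2),
      (if ⌊(n : ℝ) * (y p.1 + y p.2)⌋₊ = 0 then Measure.dirac y
        else ((⌊(n : ℝ) * (y p.1 + y p.2)⌋₊ : ℝ≥0∞))⁻¹ •
          ∑ k ∈ Finset.range ⌊(n : ℝ) * (y p.1 + y p.2)⌋₊,
            Measure.dirac (Function.update (Function.update y p.1 ((k : ℝ) / n)) p.2
              (y p.1 + y p.2 - (k : ℝ) / n)))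

/-!
Induction on `k`. For bounded continuous `f`, the function `x ↦ ∫ f d(K x)` is again bounded and
continuous, so the induction hypothesis applies to it, and it remains to compare one discrete step
with one continuous step on `Δ_{N-1}(n)`, where the discrete marginals live. For `y ∈ Δ_{N-1}(n)`
and a pair `(i, j)` write `y_i + y_j = m / n`; the discrete step moves `y` to `T_{i,j,k/m}(y)` with
`k` uniform on `{0, …, m-1}`, so against `f` it is a left Riemann sum with mesh `1/m` of
`u ↦ f (T_{i,j,u}(y))` over `[0, 1]`, which is what the continuous step integrates. As
`dist (T_{i,j,u} y) (T_{i,j,v} y) ≤ |u - v| (y_i + y_j)`, neighbouring nodes are `1/n` apart, and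
uniform continuity of `f` on the compact simplex makes `P_n f - K f` uniformly small on
`Δ_{N-1}(n)`.
-/

open scoped ProbabilityTheory BoundedContinuousFunction

section Bind

variable {α : Type*} [MeasurableSpace α] {κ : α → Measure α} {μ : Measure α}

lemma integral_bind (hκ : Measurable κ) (hκ₁ : ∀ x, IsProbabilityMeasure (κ x)) [SFinite μ]
    {f : α → ℝ} (hf : Integrable f (μ.bind κ)) :
    ∫ x, f x ∂μ.bind κ = ∫ x, ∫ y, f y ∂κ x ∂μ := by
  let K : ProbabilityTheory.Kernel α α := ⟨κ, hκ⟩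
  have : ProbabilityTheory.IsMarkovKernel K := ⟨hκ₁⟩
  change Integrable f (K ∘ₘ μ) at hf
  change ∫ x, f x ∂(K ∘ₘ μ) = ∫ x, ∫ y, f y ∂K x ∂μ
  rw [Measure.comp_eq_comp_const_apply] at hf ⊢
  rw [ProbabilityTheory.Kernel.integral_comp hf]
  simp

lemma MeasureTheory.Integrable.integral_bind (hκ : Measurable κ)
    (hκ₁ : ∀ x, IsProbabilityMeasure (κ x)) [SFinite μ] {f : α → ℝ}
    (hf : Integrable f (μ.bind κ)) : Integrable (fun x => ∫ y, f y ∂κ x) μ := by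
  let K : ProbabilityTheory.Kernel α α := ⟨κ, hκ⟩
  have : ProbabilityTheory.IsMarkovKernel K := ⟨hκ₁⟩
  change Integrable f (K ∘ₘ μ) at hf
  rw [Measure.comp_eq_comp_const_apply] at hf
  simpa [K] using hf.integral_comp

lemma abs_integral_bind_sub_le [IsProbabilityMeasure μ] (hκ : Measurable κ)
    (hκ₁ : ∀ x, IsProbabilityMeasure (κ x)) {f g : α → ℝ} (hf : Integrable f (μ.bind κ))
    (hg : Integrable g μ) {ε : ℝ} (hfg : ∀ᵐ x ∂μ, |∫ y, f y ∂κ x - g x| ≤ ε) :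
    |∫ x, f x ∂μ.bind κ - ∫ x, g x ∂μ| ≤ ε := by
  rw [integral_bind hκ hκ₁ hf, ← integral_sub (hf.integral_bind hκ hκ₁) hg]
  have := norm_integral_le_of_norm_le_const (μ := μ)
    (f := fun x => ∫ y, f y ∂κ x - g x) (by simpa only [Real.norm_eq_abs] using hfg)
  simpa using this

lemma isProbabilityMeasure_evolve (hκ : Measurable κ) (hκ₁ : ∀ x, IsProbabilityMeasure (κ x))
    [IsProbabilityMeasure μ] (k : ℕ) : IsProbabilityMeasure (evolve κ k μ) := by
  induction k with
  | zero => assumption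
  | succ k ih => exact isProbabilityMeasure_bind hκ.aemeasurable (ae_of_all _ hκ₁)

lemma ae_mem_evolve (hκ : Measurable κ) {s : Set α} (hs : MeasurableSet s)
    (hμ : ∀ᵐ x ∂μ, x ∈ s) (hκs : ∀ x ∈ s, ∀ᵐ y ∂κ x, y ∈ s) (k : ℕ) :
    ∀ᵐ x ∂evolve κ k μ, x ∈ s := by
  induction k with
  | zero => exact hμ
  | succ k ih =>
    exact Measure.ae_comp_of_ae_ae (κ := ⟨κ, hκ⟩) hs (ih.mono hκs)

end Bind

section Mixture

variable {α β ι : Type*} [MeasurableSpace α] [MeasurableSpace β] {s : Finset ι} {c : ℝ≥0∞}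

lemma measurable_smul_finsetSum {κ : ι → β → Measure α} (hκ : ∀ i ∈ s, Measurable (κ i)) :
    Measurable fun x => c • ∑ i ∈ s, κ i x := by
  refine Measure.measurable_of_measurable_coe _ fun t ht => ?_
  simp only [Measure.smul_apply, Measure.finsetSum_apply, smul_eq_mul]
  exact (Finset.measurable_sum _ fun i hi => (Measure.measurable_coe ht).comp (hκ i hi)).const_mul _

lemma isProbabilityMeasure_smul_finsetSum (hc : c * s.card = 1) {ν : ι → Measure α}
    (hν : ∀ i ∈ s, IsProbabilityMeasure (ν i)) : IsProbabilityMeasure (c • ∑ i ∈ s, ν i) := by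
  constructor
  rw [Measure.smul_apply, Measure.finsetSum_apply,
    Finset.sum_congr rfl fun i hi => (hν i hi).measure_univ]
  simpa using hc

lemma ae_smul_finsetSum {ν : ι → Measure α} {p : α → Prop} (hν : ∀ i ∈ s, ∀ᵐ x ∂ν i, p x) :
    ∀ᵐ x ∂(c • ∑ i ∈ s, ν i), p x := by
  rw [ae_iff, Measure.smul_apply, Measure.finsetSum_apply,
    Finset.sum_eq_zero fun i hi => ae_iff.1 (hν i hi), smul_zero]

lemma integral_smul_finsetSum [TopologicalSpace α] [OpensMeasurableSpace α] {ν : ι → Measure α}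
    (hν : ∀ i ∈ s, IsFiniteMeasure (ν i)) (f : α →ᵇ ℝ) :
    ∫ x, f x ∂(c • ∑ i ∈ s, ν i) = c.toReal * ∑ i ∈ s, ∫ x, f x ∂ν i := by
  rw [integral_smul_measure, smul_eq_mul,
    integral_finsetSum_measure fun i hi => have := hν i hi; f.integrable _]

lemma abs_integral_smul_finsetSum_sub_le [TopologicalSpace α] [OpensMeasurableSpace α]
    (hc : c * s.card = 1) {ν ν' : ι → Measure α} (hν : ∀ i ∈ s, IsFiniteMeasure (ν i))
    (hν' : ∀ i ∈ s, IsFiniteMeasure (ν' i)) (f : α →ᵇ ℝ) {ε : ℝ}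
    (h : ∀ i ∈ s, |∫ x, f x ∂ν i - ∫ x, f x ∂ν' i| ≤ ε) :
    |∫ x, f x ∂(c • ∑ i ∈ s, ν i) - ∫ x, f x ∂(c • ∑ i ∈ s, ν' i)| ≤ ε := by
  have hc' : c.toReal * s.card = 1 := by simpa using congrArg ENNReal.toReal hc
  rw [integral_smul_finsetSum hν, integral_smul_finsetSum hν', ← mul_sub,
    ← Finset.sum_sub_distrib, abs_mul, ENNReal.abs_toReal]
  calc c.toReal * |∑ i ∈ s, (∫ x, f x ∂ν i - ∫ x, f x ∂ν' i)|
      ≤ c.toReal * ∑ _i ∈ s, ε := by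
        gcongr
        exact (Finset.abs_sum_le_sum_abs _ _).trans (Finset.sum_le_sum h)
    _ = ε := by rw [Finset.sum_const, nsmul_eq_mul, ← mul_assoc, hc', one_mul]

lemma measurable_map_of_measurable_uncurry {γ : Type*} [MeasurableSpace γ] {F : β → γ → α}
    (hF : Measurable (Function.uncurry F)) (ν : Measure γ) [SFinite ν] :
    Measurable fun x => ν.map (F x) := by
  have h (x : β) : ν.map (F x) = (ν.map (Prod.mk x)).map (Function.uncurry F) := by
    rw [Measure.map_map hF measurable_prodMk_left]; rfl
  simp_rw [h]
  exact (Measure.measurable_map _ hF).comp Measurable.map_prodMk_left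

end Mixture

lemma sum_update_eq_sub_add {ι : Type*} [Fintype ι] [DecidableEq ι] (f : ι → ℝ) (i : ι) (b : ℝ) :
    ∑ l, Function.update f i b l = ∑ l, f l - f i + b := by
  rw [Finset.sum_update_of_mem (Finset.mem_univ i),
    Finset.sum_eq_add_sum_sdiff_singleton_of_mem (Finset.mem_univ i) f]
  ring

lemma abs_riemannSum_sub_integral_le {g : ℝ → ℝ} (hg : Continuous g) {m : ℕ} (hm : m ≠ 0)
    {ε : ℝ} (h : ∀ k < m, ∀ u ∈ Set.Icc ((k : ℝ) / m) ((k + 1) / m), |g u - g (k / m)| ≤ ε) :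
    |(m : ℝ)⁻¹ * ∑ k ∈ Finset.range m, g (k / m) - ∫ u in (0 : ℝ)..1, g u| ≤ ε := by
  have hm' : (0 : ℝ) < m := by positivity
  set a : ℕ → ℝ := fun k => k / m
  have hlen (k : ℕ) : a (k + 1) - a k = (m : ℝ)⁻¹ := by simp only [a]; push_cast; field_simp; ring
  have hsplit : ∫ u in (0 : ℝ)..1, g u = ∑ k ∈ Finset.range m, ∫ u in a k..a (k + 1), g u := by
    rw [intervalIntegral.sum_integral_adjacent_intervals fun k _ => hg.intervalIntegrable _ _]
    simp [a, hm]
  have hpiece : ∀ k ∈ Finset.range m,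
      |(m : ℝ)⁻¹ * g (a k) - ∫ u in a k..a (k + 1), g u| ≤ ε * (m : ℝ)⁻¹ := by
    intro k hk
    have hle : a k ≤ a (k + 1) := by linarith [hlen k, inv_pos.2 hm']
    have hconst : (m : ℝ)⁻¹ * g (a k) = ∫ _ in a k..a (k + 1), g (a k) := by
      rw [intervalIntegral.integral_const, hlen, smul_eq_mul]
    rw [hconst,
      ← intervalIntegral.integral_sub intervalIntegrable_const (hg.intervalIntegrable _ _),
      ← Real.norm_eq_abs, ← hlen k, ← abs_of_nonneg (sub_nonneg.2 hle)]
    refine intervalIntegral.norm_integral_le_of_norm_le_const fun u hu => ?_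
    rw [Set.uIoc_of_le hle] at hu
    rw [Real.norm_eq_abs, abs_sub_comm]
    exact h k (Finset.mem_range.1 hk) u ⟨hu.1.le, by simpa [a] using hu.2⟩
  calc |(m : ℝ)⁻¹ * ∑ k ∈ Finset.range m, g (a k) - ∫ u in (0 : ℝ)..1, g u|
      = |∑ k ∈ Finset.range m, ((m : ℝ)⁻¹ * g (a k) - ∫ u in a k..a (k + 1), g u)| := by
        rw [hsplit, Finset.mul_sum, Finset.sum_sub_distrib]
    _ ≤ ∑ _k ∈ Finset.range m, ε * (m : ℝ)⁻¹ :=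
        (Finset.abs_sum_le_sum_abs _ _).trans (Finset.sum_le_sum hpiece)
    _ = ε := by rw [Finset.sum_const, Finset.card_range, nsmul_eq_mul]; field_simp

section CfT

variable {N : ℕ} {i j : Fin N}

lemma continuous_cfT (i j : Fin N) : Continuous fun q : (Fin N → ℝ) × ℝ => cfT N i j q.2 q.1 := by
  unfold cfT; fun_prop

lemma cfT_mem_stdSimplex (hij : i ≠ j) {u : ℝ} (hu : u ∈ Set.Icc (0 : ℝ) 1)
    {x : Fin N → ℝ} (hx : x ∈ stdSimplex ℝ (Fin N)) : cfT N i j u x ∈ stdSimplex ℝ (Fin N) := by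
  have hs : 0 ≤ x i + x j := add_nonneg (hx.1 i) (hx.1 j)
  refine ⟨fun l => ?_, ?_⟩
  · unfold cfT
    rcases eq_or_ne l j with rfl | hlj
    · simpa using mul_nonneg (sub_nonneg.2 hu.2) hs
    rcases eq_or_ne l i with rfl | hli
    · simpa [hlj] using mul_nonneg hu.1 hs
    · simpa [hlj, hli] using hx.1 l
  · rw [cfT, sum_update_eq_sub_add, sum_update_eq_sub_add, Function.update_of_ne hij.symm, hx.2]
    ring

lemma dist_cfT_le (i j : Fin N) (u v : ℝ) (x : Fin N → ℝ) :
    dist (cfT N i j u x) (cfT N i j v x) ≤ |u - v| * |x i + x j| := by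
  refine (dist_pi_le_iff (by positivity)).2 fun l => ?_
  unfold cfT
  rcases eq_or_ne l j with rfl | hlj
  · rw [Function.update_self, Function.update_self, Real.dist_eq, ← abs_mul]
    exact le_of_eq (by rw [abs_sub_comm]; congr 1; ring)
  rcases eq_or_ne l i with rfl | hli
  · simp only [Function.update_of_ne hlj, Function.update_self, Real.dist_eq, ← abs_mul]
    exact (congrArg abs (by ring)).le
  · simp only [Function.update_of_ne hlj, Function.update_of_ne hli, dist_self]
    positivity

lemma cfT_of_eq_zero {x : Fin N → ℝ} (hi : x i = 0) (hj : x j = 0) (u : ℝ) : cfT N i j u x = x := by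
  ext l
  simp only [cfT, Function.update_apply]
  split_ifs <;> simp_all

variable {n m : ℕ} {y : Fin N → ℝ}

lemma cfT_div_eq_update (hm : m ≠ 0) (hs : y i + y j = m / n) (k : ℕ) :
    cfT N i j (k / m) y =
      Function.update (Function.update y i (k / n)) j (y i + y j - k / n) := by
  simp only [cfT, hs]
  field_simp

lemma cfT_div_mem_discSimplex (hij : i ≠ j) (hy : y ∈ discSimplex N n) (hm : m ≠ 0)
    (hs : y i + y j = m / n) {k : ℕ} (hk : k ≤ m) : cfT N i j (k / m) y ∈ discSimplex N n := by
  refine ⟨cfT_mem_stdSimplex hij ⟨by positivity, div_le_one_of_le₀ (by exact_mod_cast hk)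
    (by positivity)⟩ hy.1, fun l => ?_⟩
  rw [cfT_div_eq_update hm hs]
  rcases eq_or_ne l j with rfl | hlj
  · exact ⟨m - k, by rw [Function.update_self, hs, Nat.cast_sub hk]; ring⟩
  rcases eq_or_ne l i with rfl | hli
  · exact ⟨k, by rw [Function.update_of_ne hlj, Function.update_self]⟩
  · simpa [Function.update_of_ne hlj, Function.update_of_ne hli] using hy.2 l

end CfT

instance : IsProbabilityMeasure (volume.restrict (Set.Icc (0 : ℝ) 1)) := ⟨by simp⟩

noncomputable def cfPairK (N : ℕ) (p : Fin N × Fin N) (x : Fin N → ℝ) : Measure (Fin N → ℝ) :=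
  (volume.restrict (Set.Icc (0 : ℝ) 1)).map (fun u => cfT N p.1 p.2 u x)

noncomputable def cfSplit (N n : ℕ) (p : Fin N × Fin N) (m : ℕ) (y : Fin N → ℝ) :
    Measure (Fin N → ℝ) :=
  if m = 0 then Measure.dirac y
  else (m : ℝ≥0∞)⁻¹ • ∑ k ∈ Finset.range m,
    Measure.dirac (Function.update (Function.update y p.1 ((k : ℝ) / n)) p.2
      (y p.1 + y p.2 - (k : ℝ) / n))

section PairKernels

variable {N n : ℕ} (p : Fin N × Fin N)

lemma measurable_cfPairK : Measurable (cfPairK N p) :=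
  measurable_map_of_measurable_uncurry (continuous_cfT p.1 p.2).measurable _

instance (x : Fin N → ℝ) : IsProbabilityMeasure (cfPairK N p x) :=
  Measure.isProbabilityMeasure_map ((continuous_cfT p.1 p.2).comp
    (continuous_const.prodMk continuous_id)).aemeasurable

lemma integral_cfPairK_eq_setIntegral (f : (Fin N → ℝ) →ᵇ ℝ) (x : Fin N → ℝ) :
    ∫ z, f z ∂cfPairK N p x = ∫ u in Set.Icc (0 : ℝ) 1, f (cfT N p.1 p.2 u x) :=
  integral_map ((continuous_cfT p.1 p.2).comp (continuous_const.prodMk continuous_id)).aemeasurable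
    f.continuous.aestronglyMeasurable

lemma continuous_integral_cfPairK (f : (Fin N → ℝ) →ᵇ ℝ) :
    Continuous fun x => ∫ z, f z ∂cfPairK N p x := by
  simp_rw [integral_cfPairK_eq_setIntegral]
  exact continuous_parametric_integral_of_continuous
    (f := fun x u => f (cfT N p.1 p.2 u x)) (f.continuous.comp (continuous_cfT p.1 p.2))
    isCompact_Icc

lemma cfPairK_of_eq_zero {x : Fin N → ℝ} (h₁ : x p.1 = 0) (h₂ : x p.2 = 0) :
    cfPairK N p x = Measure.dirac x := by
  simp [cfPairK, cfT_of_eq_zero h₁ h₂, Measure.map_const]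

lemma measurable_cfSplit (m : ℕ) : Measurable (cfSplit N n p m) := by
  unfold cfSplit
  split_ifs
  · exact Measure.measurable_dirac
  · exact measurable_smul_finsetSum fun k _ => Measure.measurable_dirac.comp (by fun_prop)

instance (m : ℕ) (y : Fin N → ℝ) : IsProbabilityMeasure (cfSplit N n p m y) := by
  unfold cfSplit
  split_ifs with hm
  · infer_instance
  · exact isProbabilityMeasure_smul_finsetSum
      (by simpa using ENNReal.inv_mul_cancel (by exact_mod_cast hm) (ENNReal.natCast_ne_top _))
      fun _ _ => inferInstance

variable {p} {m : ℕ} {y : Fin N → ℝ}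

lemma cfSplit_eq_sum_dirac_cfT (hm : m ≠ 0) (hs : y p.1 + y p.2 = m / n) :
    cfSplit N n p m y = (m : ℝ≥0∞)⁻¹ • ∑ k ∈ Finset.range m,
      Measure.dirac (cfT N p.1 p.2 (k / m) y) := by
  simp only [cfSplit, if_neg hm, cfT_div_eq_update hm hs]

lemma ae_mem_discSimplex_cfSplit (hp : p.1 ≠ p.2) (hy : y ∈ discSimplex N n)
    (hs : y p.1 + y p.2 = m / n) : ∀ᵐ z ∂cfSplit N n p m y, z ∈ discSimplex N n := by
  rcases eq_or_ne m 0 with rfl | hm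
  · simpa [cfSplit, ae_dirac_eq] using hy
  rw [cfSplit_eq_sum_dirac_cfT hm hs]
  refine ae_smul_finsetSum fun k hk => ?_
  rw [ae_dirac_eq]
  exact cfT_div_mem_discSimplex hp hy hm hs (Finset.mem_range.1 hk).le

end PairKernels

lemma abs_integral_cfSplit_sub_cfPairK_le {N n m : ℕ} {p : Fin N × Fin N} (hp : p.1 ≠ p.2)
    {y : Fin N → ℝ} (hy : y ∈ stdSimplex ℝ (Fin N)) (hs : y p.1 + y p.2 = m / n)
    (f : (Fin N → ℝ) →ᵇ ℝ) {ε : ℝ} (hε : 0 ≤ ε)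
    (hf : ∀ z ∈ stdSimplex ℝ (Fin N), ∀ w ∈ stdSimplex ℝ (Fin N),
      dist z w ≤ 1 / n → dist (f z) (f w) ≤ ε) :
    |∫ z, f z ∂cfSplit N n p m y - ∫ z, f z ∂cfPairK N p y| ≤ ε := by
  rcases eq_or_ne m 0 with rfl | hm
  · obtain ⟨h₁, h₂⟩ : y p.1 = 0 ∧ y p.2 = 0 := by
      simp only [Nat.cast_zero, zero_div] at hs
      constructor <;> linarith [hy.1 p.1, hy.1 p.2]
    simp [cfSplit, cfPairK_of_eq_zero p h₁ h₂, hε]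
  have hm' : (0 : ℝ) < m := by positivity
  rw [cfSplit_eq_sum_dirac_cfT hm hs, integral_smul_finsetSum (fun _ _ => inferInstance),
    integral_cfPairK_eq_setIntegral, integral_Icc_eq_integral_Ioc,
    ← intervalIntegral.integral_of_le zero_le_one]
  simp only [integral_dirac, ENNReal.toReal_inv, ENNReal.toReal_natCast]
  refine abs_riemannSum_sub_integral_le (g := fun u => f (cfT N p.1 p.2 u y))
    (f.continuous.comp ((continuous_cfT p.1 p.2).comp (continuous_const.prodMk continuous_id)))
    hm fun k hk u hu => ?_
  have hk1 : ((k : ℝ) + 1) / m ≤ 1 := (div_le_one hm').2 (by exact_mod_cast hk)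
  have hk0 : (0 : ℝ) ≤ k / m := by positivity
  rw [← Real.dist_eq]
  refine hf _ (cfT_mem_stdSimplex hp ⟨hk0.trans hu.1, hu.2.trans hk1⟩ hy) _
    (cfT_mem_stdSimplex hp ⟨hk0, (div_le_div_of_nonneg_right (by linarith) hm'.le).trans hk1⟩ hy) ?_
  calc dist (cfT N p.1 p.2 u y) (cfT N p.1 p.2 (k / m) y)
      ≤ |u - k / m| * |y p.1 + y p.2| := dist_cfT_le _ _ _ _ _
    _ ≤ 1 / m * (m / n) := by
        rw [hs, abs_of_nonneg (sub_nonneg.2 hu.1), abs_of_nonneg (by positivity)]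
        gcongr
        linarith [hu.2, show ((k : ℝ) + 1) / m = k / m + 1 / m by ring]
    _ = 1 / n := by field_simp

section Kernels

variable {N : ℕ}

lemma cfK_eq (x : Fin N → ℝ) :
    cfK N x = ((N : ℝ≥0∞) * ((N : ℝ≥0∞) - 1))⁻¹ •
      ∑ p ∈ Finset.univ.filter (fun p : Fin N × Fin N => p.1 ≠ p.2), cfPairK N p x := rfl

lemma cfKd_eq (n : ℕ) (y : Fin N → ℝ) :
    cfKd N n y = ((N : ℝ≥0∞) * ((N : ℝ≥0∞) - 1))⁻¹ •
      ∑ p ∈ Finset.univ.filter (fun p : Fin N × Fin N => p.1 ≠ p.2),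
        cfSplit N n p ⌊(n : ℝ) * (y p.1 + y p.2)⌋₊ y := rfl

lemma inv_mul_card_offDiag (hN : 2 ≤ N) :
    ((N : ℝ≥0∞) * ((N : ℝ≥0∞) - 1))⁻¹ *
      (Finset.univ.filter (fun p : Fin N × Fin N => p.1 ≠ p.2)).card = 1 := by
  have hcard : (Finset.univ.filter (fun p : Fin N × Fin N => p.1 ≠ p.2)).card = N * (N - 1) := by
    have : Finset.univ.filter (fun p : Fin N × Fin N => p.1 ≠ p.2) = Finset.univ.offDiag := by
      ext; simp
    rw [this, Finset.offDiag_card, Finset.card_univ, Fintype.card_fin, Nat.mul_sub_one]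
  have hsub : (N : ℝ≥0∞) - 1 = ((N - 1 : ℕ) : ℝ≥0∞) := by simp [ENNReal.natCast_sub]
  rw [hsub, ← Nat.cast_mul, hcard]
  exact ENNReal.inv_mul_cancel
    (by rw [Nat.cast_ne_zero]; exact Nat.mul_ne_zero (by omega) (by omega))
    (ENNReal.natCast_ne_top _)

lemma measurable_cfK (N : ℕ) : Measurable (cfK N) :=
  measurable_smul_finsetSum fun p _ => measurable_cfPairK p

lemma isProbabilityMeasure_cfK (hN : 2 ≤ N) (x : Fin N → ℝ) : IsProbabilityMeasure (cfK N x) := by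
  rw [cfK_eq]
  exact isProbabilityMeasure_smul_finsetSum (inv_mul_card_offDiag hN) fun _ _ => inferInstance

lemma measurable_cfKd (n : ℕ) : Measurable (cfKd N n) :=
  measurable_smul_finsetSum fun p _ =>
    (measurable_from_prod_countable_left (f := fun q : (Fin N → ℝ) × ℕ => cfSplit N n p q.2 q.1)
      (measurable_cfSplit p)).comp (measurable_id.prodMk
        (by fun_prop : Measurable fun y : Fin N → ℝ => (n : ℝ) * (y p.1 + y p.2)).nat_floor)

lemma isProbabilityMeasure_cfKd (hN : 2 ≤ N) (n : ℕ) (y : Fin N → ℝ) :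
    IsProbabilityMeasure (cfKd N n y) := by
  rw [cfKd_eq]
  exact isProbabilityMeasure_smul_finsetSum (inv_mul_card_offDiag hN) fun _ _ => inferInstance

lemma measurableSet_discSimplex (N n : ℕ) : MeasurableSet (discSimplex N n) := by
  have : discSimplex N n = stdSimplex ℝ (Fin N) ∩ ⋂ i, ⋃ k : ℕ, {x | x i = k / n} := by
    ext; simp [discSimplex]
  rw [this]
  exact (isClosed_stdSimplex ℝ (Fin N)).measurableSet.inter
    (.iInter fun i => .iUnion fun _ =>
      measurableSet_eq_fun (measurable_pi_apply i) measurable_const)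

lemma exists_add_eq_div_of_mem_discSimplex {n : ℕ} {y : Fin N → ℝ} (hy : y ∈ discSimplex N n)
    (i j : Fin N) : ∃ m : ℕ, y i + y j = m / n := by
  obtain ⟨a, ha⟩ := hy.2 i
  obtain ⟨b, hb⟩ := hy.2 j
  exact ⟨a + b, by rw [ha, hb]; push_cast; ring⟩

lemma floor_mul_add_eq {n m : ℕ} (hn : n ≠ 0) {y : Fin N → ℝ} {i j : Fin N}
    (hs : y i + y j = m / n) : ⌊(n : ℝ) * (y i + y j)⌋₊ = m := by
  rw [hs, mul_div_cancel₀ _ (by exact_mod_cast hn), Nat.floor_natCast]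

lemma ae_mem_discSimplex_cfKd {n : ℕ} (hn : n ≠ 0) {y : Fin N → ℝ} (hy : y ∈ discSimplex N n) :
    ∀ᵐ z ∂cfKd N n y, z ∈ discSimplex N n := by
  rw [cfKd_eq]
  refine ae_smul_finsetSum fun p hp => ?_
  obtain ⟨m, hs⟩ := exists_add_eq_div_of_mem_discSimplex hy p.1 p.2
  rw [floor_mul_add_eq hn hs]
  exact ae_mem_discSimplex_cfSplit (Finset.mem_filter.1 hp).2 hy hs

lemma exists_boundedContinuous_eq_integral_cfK (hN : 2 ≤ N) (f : (Fin N → ℝ) →ᵇ ℝ) :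
    ∃ g : (Fin N → ℝ) →ᵇ ℝ, ∀ x, g x = ∫ z, f z ∂cfK N x := by
  have hcont : Continuous fun x => ∫ z, f z ∂cfK N x := by
    simp_rw [cfK_eq, integral_smul_finsetSum (fun _ _ => inferInstance)]
    exact continuous_const.mul (continuous_finsetSum _ fun p _ => continuous_integral_cfPairK p f)
  have hbound (x : Fin N → ℝ) : ‖∫ z, f z ∂cfK N x‖ ≤ ‖f‖ :=
    have := isProbabilityMeasure_cfK hN x
    f.norm_integral_le_norm _
  exact ⟨.ofNormedAddCommGroup _ hcont ‖f‖ hbound, fun _ => rfl⟩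

lemma eventually_abs_integral_cfKd_sub_cfK_le (hN : 2 ≤ N) (f : (Fin N → ℝ) →ᵇ ℝ) {ε : ℝ}
    (hε : 0 < ε) : ∀ᶠ n in atTop, ∀ y ∈ discSimplex N n,
      |∫ z, f z ∂cfKd N n y - ∫ z, f z ∂cfK N y| ≤ ε := by
  obtain ⟨δ, hδ, hf⟩ := Metric.uniformContinuousOn_iff_le.1
    ((isCompact_stdSimplex ℝ (Fin N)).uniformContinuousOn_of_continuous
      f.continuous.continuousOn) ε hε
  filter_upwards [eventually_ne_atTop 0,
    tendsto_one_div_atTop_nhds_zero_nat.eventually (eventually_le_nhds hδ)] with n hn hnδ y hy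
  rw [cfKd_eq, cfK_eq]
  refine abs_integral_smul_finsetSum_sub_le (inv_mul_card_offDiag hN) (fun _ _ => inferInstance)
    (fun _ _ => inferInstance) f fun p hp => ?_
  obtain ⟨m, hs⟩ := exists_add_eq_div_of_mem_discSimplex hy p.1 p.2
  rw [floor_mul_add_eq hn hs]
  exact abs_integral_cfSplit_sub_cfPairK_le (Finset.mem_filter.1 hp).2 hy.1 hs f hε.le
    fun z hz w hw hzw => hf z hz w hw (hzw.trans hnδ)

end Kernels

theorem discrete_to_continuous_marginals_general (N : ℕ) (hN : 2 ≤ N)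
    (μn : ℕ → Measure (Fin N → ℝ)) (μ₀ : Measure (Fin N → ℝ))
    (hprobn : ∀ n, 1 ≤ n → IsProbabilityMeasure (μn n))
    (hsuppn : ∀ n, 1 ≤ n → μn n (discSimplex N n) = 1)
    (hprob0 : IsProbabilityMeasure μ₀)
    (hconv : ∀ f : BoundedContinuousFunction (Fin N → ℝ) ℝ,
      Tendsto (fun n => ∫ x, f x ∂(μn n)) atTop (𝓝 (∫ x, f x ∂μ₀))) :
    ∀ k : ℕ, ∀ f : BoundedContinuousFunction (Fin N → ℝ) ℝ,
      Tendsto (fun n => ∫ x, f x ∂(evolve (cfKd N n) k (μn n))) atTop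
        (𝓝 (∫ x, f x ∂(evolve (cfK N) k μ₀))) := by
  intro k
  induction k with
  | zero => exact hconv
  | succ k ih =>
    intro f
    obtain ⟨g, hg⟩ := exists_boundedContinuous_eq_integral_cfK hN f
    have := isProbabilityMeasure_evolve (measurable_cfK N) (isProbabilityMeasure_cfK hN) (μ := μ₀)
    have hlimit : ∫ x, f x ∂evolve (cfK N) (k + 1) μ₀ = ∫ x, g x ∂evolve (cfK N) k μ₀ := by
      simp only [hg]
      exact integral_bind (measurable_cfK N) (isProbabilityMeasure_cfK hN)
        (f.integrable (evolve (cfK N) (k + 1) μ₀))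
    rw [hlimit]
    refine (ih g).congr_dist (Metric.tendsto_nhds.2 fun ε hε => ?_)
    filter_upwards [eventually_ge_atTop 1,
      eventually_abs_integral_cfKd_sub_cfK_le hN f (half_pos hε)] with n hn hclose
    have := hprobn n hn
    have := isProbabilityMeasure_evolve (measurable_cfKd n) (isProbabilityMeasure_cfKd hN n)
      (μ := μn n)
    have hsupp : ∀ᵐ y ∂evolve (cfKd N n) k (μn n), y ∈ discSimplex N n :=
      ae_mem_evolve (measurable_cfKd n) (measurableSet_discSimplex N n)
        ((ae_mem_iff_measure_eq (measurableSet_discSimplex N n).nullMeasurableSet).2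
          (by rw [hsuppn n hn, measure_univ]))
        (fun y hy => ae_mem_discSimplex_cfKd (by omega) hy) k
    rw [Real.dist_0_eq_abs, abs_dist, dist_comm, Real.dist_eq]
    exact (abs_integral_bind_sub_le (measurable_cfKd n) (isProbabilityMeasure_cfKd hN n)
      (f.integrable (evolve (cfKd N n) (k + 1) (μn n))) (g.integrable _)
      (hsupp.mono fun y hy => hg y ▸ hclose y hy)).trans_lt (half_lt_self hε)

/-- If the initial distributions `μₙ` of the scaled discrete coagulation–fragmentation
chains converge weakly to an initial distribution `μ₀` on the simplex, then for every
time `k` the time-`k` marginals of the discrete chains converge weakly to the time-`k`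
marginal of the continuous coagulation–fragmentation chain. -/
theorem discrete_to_continuous_marginals (N : ℕ) (hN : 2 ≤ N)
    (μn : ℕ → Measure (Fin N → ℝ)) (μ₀ : Measure (Fin N → ℝ))
    (hprobn : ∀ n, 1 ≤ n → IsProbabilityMeasure (μn n))
    (hsuppn : ∀ n, 1 ≤ n → μn n (discSimplex N n) = 1)
    (hprob0 : IsProbabilityMeasure μ₀)
    (hsupp0 : μ₀ (stdSimplex ℝ (Fin N)) = 1)
    (hconv : ∀ f : BoundedContinuousFunction (Fin N → ℝ) ℝ,
      Tendsto (fun n => ∫ x, f x ∂(μn n)) atTop (𝓝 (∫ x, f x ∂μ₀))) :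
    ∀ k : ℕ, ∀ f : BoundedContinuousFunction (Fin N → ℝ) ℝ,
      Tendsto (fun n => ∫ x, f x ∂(evolve (cfKd N n) k (μn n))) atTop
        (𝓝 (∫ x, f x ∂(evolve (cfK N) k μ₀))) :=
  discrete_to_continuous_marginals_general N hN μn μ₀ hprobn hsuppn hprob0 hconv
end

section
/- Let u = (u_1, u_2, u_3) and v = (v_1, v_2, v_3) be points of the simplex Δ_2 with u_3 ≤ 2/3, v_1 ≤ 1 − u_3 and v_1 < 1. Set m_1 = v_1/(1 − u_3) and m_2 = v_2/(1 − v_1). Then m_1 ∈ [0,1], m_2 ∈ [0,1], and the composition of two coagulation–fragmentation maps sends u to v: T_{2,3,m_2}(T_{1,2,m_1}(u)) = v. In particular, any point of Δ_2 satisfying these conditions can be reached from u by exactly two deterministic coagulation–fragmentation steps. -/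
/-- Deterministic two-step transport on the simplex `Δ₂`: if `u, v ∈ Δ₂` satisfy
`u₃ ≤ 2/3`, `v₁ ≤ 1 - u₃` and `v₁ < 1`, then with `m₁ = v₁/(1-u₃)` and `m₂ = v₂/(1-v₁)`
one has `m₁, m₂ ∈ [0,1]` and `T_{2,3,m₂}(T_{1,2,m₁}(u)) = v`: the point `v` is reached
from `u` by exactly two deterministic coagulation–fragmentation steps. -/
theorem two_step_deterministic_transport (u v : Fin 3 → ℝ)
    (hu : u ∈ stdSimplex ℝ (Fin 3)) (hv : v ∈ stdSimplex ℝ (Fin 3))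
    (hu3 : u 2 ≤ 2 / 3) (hv1 : v 0 ≤ 1 - u 2) (hv1' : v 0 < 1) :
    v 0 / (1 - u 2) ∈ Set.Icc (0 : ℝ) 1 ∧
    v 1 / (1 - v 0) ∈ Set.Icc (0 : ℝ) 1 ∧
    cfT 3 1 2 (v 1 / (1 - v 0)) (cfT 3 0 1 (v 0 / (1 - u 2)) u) = v := by
  obtain ⟨hunn, husum⟩ := hu
  obtain ⟨hvnn, hvsum⟩ := hv
  have husum' : u 0 + u 1 + u 2 = 1 := by simpa [Fin.sum_univ_three] using husum
  have hvsum' : v 0 + v 1 + v 2 = 1 := by simpa [Fin.sum_univ_three] using hvsum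
  have hu2pos : (0 : ℝ) < 1 - u 2 := by linarith
  have hv0pos : (0 : ℝ) < 1 - v 0 := by linarith
  have hne1 : (1 : ℝ) - u 2 ≠ 0 := hu2pos.ne'
  have hne2 : (1 : ℝ) - v 0 ≠ 0 := hv0pos.ne'
  have hu01 : u 0 + u 1 = 1 - u 2 := by linarith
  have h1 : v 0 / (1 - u 2) ∈ Set.Icc (0 : ℝ) 1 :=
    ⟨div_nonneg (hvnn 0) hu2pos.le, by rw [div_le_one hu2pos]; exact hv1⟩
  have h2 : v 1 / (1 - v 0) ∈ Set.Icc (0 : ℝ) 1 :=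
    ⟨div_nonneg (hvnn 1) hv0pos.le, by
      rw [div_le_one hv0pos]; have := hvnn 2; linarith⟩
  refine ⟨h1, h2, ?_⟩
  have key : (1 - v 0 / (1 - u 2)) * (u 0 + u 1) + u 2 = 1 - v 0 := by
    rw [hu01]; field_simp; ring
  funext i
  fin_cases i
  · simp only [cfT, Function.update]
    norm_num [Fin.ext_iff, hu01, div_mul_cancel₀, hne1]
  · simp only [cfT, Function.update]
    norm_num [Fin.ext_iff, key, div_mul_cancel₀, hne2]
  · simp only [cfT, Function.update]
    norm_num [Fin.ext_iff, key]
    show _ = v 2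
    field_simp
    linarith
end

section
/- Fix δ ∈ (0,1], γ > 0. Let g be a Borel probability measure on [0,∞) with finite (2+δ)-th moment ∫ w^{2+δ} dg(w) < ∞, and set m = ∫ w dg(w). Let Y be a real random variable with E[Y] = 0, E[Y²] = 1 and E[|Y|^{2+δ}] < ∞, and for λ ∈ (0,1) set η_λ = √(γλ) · Y. Let φ : ℝ → ℝ be bounded with bounded first and second derivatives and with φ'' δ-Hölder continuous. Then the grazing (continuous trading) limit of the collision operator holds: (1/λ) · E[ ∫∫ ( φ((1−λ)w + λv + η_λ w) − φ(w) ) dg(v) dg(w) ] converges, as λ → 0⁺, to −∫ φ'(w)(w − m) dg(w) + (γ/2) ∫ φ''(w) w² dg(w), i.e. to the weak form of the Fokker–Planck operator ∂_w((w−m)g) + (γ/2) ∂²_w(w² g). -/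
/-!
Write the post-trade wealth as `w + D` with `D = λ(v - w) + √(γλ) Y w`. A second-order Taylor
expansion of `φ` at `w`, whose remainder is at most `H |D|^(2+δ)` by the Hölder continuity of
`φ''`, together with `E D = λ(v - w)` and `E D² = λ²(v - w)² + γλw²`, gives
`E[φ(w + D) - φ(w)] = λ (φ'(w)(v - w) + (γ/2) φ''(w) w²) + O(λ^(1+δ/2))`, where the `O` is
uniform up to the weight `1 + |w|^(2+δ) + |v|^(2+δ)`.
The error is integrable against `g ⊗ g` by the moment assumption, so after dividing by `λ` only
`∬ φ'(w)(v - w) + (γ/2) φ''(w) w² dg(v) dg(w)` survives, and `∫ v dg(v) = m`.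
-/

open MeasureTheory ProbabilityTheory Filter Set
open scoped Topology

lemma abs_add_rpow_le (x y : ℝ) {p : ℝ} (hp : 0 ≤ p) :
    |x + y| ^ p ≤ 2 ^ p * (|x| ^ p + |y| ^ p) := by
  have hmax : max |x| |y| ^ p ≤ |x| ^ p + |y| ^ p := by
    rcases le_total |x| |y| with h | h
    · simp only [max_eq_right h, le_add_iff_nonneg_left]; positivity
    · simp only [max_eq_left h, le_add_iff_nonneg_right]; positivity
  calc |x + y| ^ p ≤ (2 * max |x| |y|) ^ p := by
        gcongr
        exact (abs_add_le x y).trans (by linarith [le_max_left |x| |y|, le_max_right |x| |y|])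
    _ = 2 ^ p * max |x| |y| ^ p := Real.mul_rpow zero_le_two (le_max_of_le_left (abs_nonneg x))
    _ ≤ 2 ^ p * (|x| ^ p + |y| ^ p) := by gcongr

lemma abs_rpow_le_one_add_abs_rpow (x : ℝ) {p q : ℝ} (hp : 0 ≤ p) (hpq : p ≤ q) :
    |x| ^ p ≤ 1 + |x| ^ q := by
  rcases le_total |x| 1 with h | h
  · linarith [Real.rpow_le_one (abs_nonneg x) h hp, Real.rpow_nonneg (abs_nonneg x) q]
  · linarith [Real.rpow_le_rpow_of_exponent_le h hpq]

lemma abs_le_mul_abs_rpow_add_one_of_hasDerivAt {f f' : ℝ → ℝ} {M p : ℝ} (hp : 0 ≤ p)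
    (hf : ∀ u, HasDerivAt f (f' u) u) (hf0 : f 0 = 0) (hf' : ∀ u, |f' u| ≤ M * |u| ^ p)
    (b : ℝ) : |f b| ≤ M * |b| ^ (p + 1) := by
  have hM : 0 ≤ M := by simpa using (abs_nonneg _).trans (hf' 1)
  have hmem : ∀ u ∈ uIcc 0 b, |u| ≤ |b| := fun u hu => by
    simpa using abs_sub_left_of_mem_uIcc hu
  have key := (convex_uIcc (0 : ℝ) b).norm_image_sub_le_of_norm_hasDerivWithin_le
    (fun u _ => (hf u).hasDerivWithinAt) (C := M * |b| ^ p)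
    (fun u hu => (hf' u).trans
      (mul_le_mul_of_nonneg_left (Real.rpow_le_rpow (abs_nonneg u) (hmem u hu) hp) hM))
    left_mem_uIcc right_mem_uIcc
  rw [Real.rpow_add_one' (abs_nonneg b) (by linarith), ← mul_assoc]
  simpa [hf0] using key

theorem abs_taylor_two_remainder_le_of_holder {φ φ' φ'' : ℝ → ℝ} {H δ : ℝ} (hδ : 0 ≤ δ)
    (hφ : ∀ x, HasDerivAt φ (φ' x) x) (hφ' : ∀ x, HasDerivAt φ' (φ'' x) x)
    (hφ'' : ∀ x y, |φ'' x - φ'' y| ≤ H * |x - y| ^ δ) (a b : ℝ) :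
    |φ (a + b) - φ a - φ' a * b - φ'' a * b ^ 2 / 2| ≤ H * |b| ^ (2 + δ) := by
  have hshift : ∀ {ψ ψ' : ℝ → ℝ}, (∀ x, HasDerivAt ψ (ψ' x) x) →
      ∀ u, HasDerivAt (fun u => ψ (a + u)) (ψ' (a + u)) u :=
    fun hψ u => (hψ (a + u)).comp_const_add a u
  have first_order : ∀ u, |φ' (a + u) - φ' a - φ'' a * u| ≤ H * |u| ^ (δ + 1) :=
    abs_le_mul_abs_rpow_add_one_of_hasDerivAt hδ
      (fun u => ((hshift hφ' u).sub_const _).sub ((hasDerivAt_id u).const_mul _ |>.congr_deriv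
        (mul_one _)))
      (by simp) (fun u => by simpa using hφ'' (a + u) a)
  have := abs_le_mul_abs_rpow_add_one_of_hasDerivAt (by positivity)
    (f := fun u => φ (a + u) - φ a - φ' a * u - φ'' a * u ^ 2 / 2)
    (fun u => by
      have := (((hshift hφ u).sub_const (φ a)).sub ((hasDerivAt_id u).const_mul (φ' a))).sub
        (((hasDerivAt_pow 2 u).const_mul (φ'' a)).div_const 2)
      exact this.congr_deriv (by norm_num; ring))
    (by simp) first_order b
  convert this using 3; ring

lemma trade_increment_rpow_le {δ γ l : ℝ} (hδ : δ ∈ Icc (0 : ℝ) 2) (hγ : 0 ≤ γ)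
    (hl : l ∈ Ioo (0 : ℝ) 1) (w v : ℝ) :
    (l * (v - w)) ^ 2 / 2 ≤ 2 * (l ^ (1 + δ / 2) * (1 + |w| ^ (2 + δ) + |v| ^ (2 + δ))) ∧
    |l * (v - w)| ^ (2 + δ)
      ≤ l ^ (1 + δ / 2) * (2 ^ (2 + δ) * (1 + |w| ^ (2 + δ) + |v| ^ (2 + δ))) ∧
    |√(γ * l) * w| ^ (2 + δ)
      ≤ γ ^ (1 + δ / 2) * (l ^ (1 + δ / 2) * (1 + |w| ^ (2 + δ) + |v| ^ (2 + δ))) := by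
  obtain ⟨hl0, hl1⟩ := hl
  set p := 2 + δ with hp
  set κ := 1 + δ / 2 with hκ
  set ψ := 1 + |w| ^ p + |v| ^ p
  have hwp : 0 ≤ |w| ^ p := by positivity
  have hvp : 0 ≤ |v| ^ p := by positivity
  have hsq : ∀ x : ℝ, x ^ 2 ≤ 1 + |x| ^ p := fun x => by
    simpa using abs_rpow_le_one_add_abs_rpow x zero_le_two (by linarith [hδ.1])
  refine ⟨?_, ?_, ?_⟩
  · have hl2 : l ^ 2 ≤ l ^ κ := by
      simpa using Real.rpow_le_rpow_of_exponent_ge hl0 hl1.le (show κ ≤ 2 by linarith [hδ.2])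
    have hvw : (v - w) ^ 2 ≤ 4 * ψ := by
      nlinarith [hsq v, hsq w, sq_nonneg (v + w)]
    calc (l * (v - w)) ^ 2 / 2 = l ^ 2 * (v - w) ^ 2 / 2 := by ring
      _ ≤ l ^ κ * (4 * ψ) / 2 := by gcongr
      _ = 2 * (l ^ κ * ψ) := by ring
  · calc |l * (v - w)| ^ p = l ^ p * |v + -w| ^ p := by
          rw [abs_mul, abs_of_pos hl0, Real.mul_rpow hl0.le (abs_nonneg _), sub_eq_add_neg]
      _ ≤ l ^ κ * (2 ^ p * (|v| ^ p + |-w| ^ p)) := by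
          gcongr ?_ * ?_
          · exact Real.rpow_le_rpow_of_exponent_ge hl0 hl1.le (by linarith [hδ.1])
          · exact abs_add_rpow_le v (-w) (by linarith [hδ.1])
      _ ≤ l ^ κ * (2 ^ p * ψ) := by rw [abs_neg]; gcongr; linarith
  · calc |√(γ * l) * w| ^ p = γ ^ κ * (l ^ κ * |w| ^ p) := by
          rw [abs_mul, abs_of_nonneg (Real.sqrt_nonneg _), Real.mul_rpow (Real.sqrt_nonneg _)
            (abs_nonneg _), Real.sqrt_eq_rpow, ← Real.rpow_mul (by positivity),
            show 1 / 2 * p = κ by rw [hp, hκ]; ring, Real.mul_rpow hγ hl0.le]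
          ring
      _ ≤ γ ^ κ * (l ^ κ * ψ) := by gcongr; linarith

section RandomIncrement

variable {Ω : Type*} [MeasurableSpace Ω] {μ : Measure Ω}

theorem abs_integral_sub_taylor_two_le_of_holder {φ φ' φ'' : ℝ → ℝ} {H δ : ℝ} (hδ : 0 ≤ δ)
    (hφ : ∀ x, HasDerivAt φ (φ' x) x) (hφ' : ∀ x, HasDerivAt φ' (φ'' x) x)
    (hφ'' : ∀ x y, |φ'' x - φ'' y| ≤ H * |x - y| ^ δ) {D : Ω → ℝ} (hD : Integrable D μ)
    (hD2 : Integrable (fun ω => D ω ^ 2) μ) (hDp : Integrable (fun ω => |D ω| ^ (2 + δ)) μ)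
    (a : ℝ) :
    |∫ ω, (φ (a + D ω) - φ a) ∂μ - (φ' a * ∫ ω, D ω ∂μ + φ'' a * (∫ ω, D ω ^ 2 ∂μ) / 2)|
      ≤ H * ∫ ω, |D ω| ^ (2 + δ) ∂μ := by
  set R := fun ω => φ (a + D ω) - φ a - φ' a * D ω - φ'' a * D ω ^ 2 / 2
  have hR : ∀ ω, ‖R ω‖ ≤ H * |D ω| ^ (2 + δ) := fun ω =>
    abs_taylor_two_remainder_le_of_holder hδ hφ hφ' hφ'' a (D ω)
  have hφc : Continuous φ := continuous_iff_continuousAt.2 fun x => (hφ x).continuousAt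
  have hRm : AEStronglyMeasurable R μ := by
    have := hφc.measurable
    have := hD.aemeasurable
    exact (by fun_prop : AEMeasurable R μ).aestronglyMeasurable
  have hRi : Integrable R μ := (hDp.const_mul H).mono' hRm (ae_of_all _ hR)
  have hquad : Integrable (fun ω => φ' a * D ω + φ'' a * D ω ^ 2 / 2) μ :=
    (hD.const_mul _).add ((hD2.const_mul _).div_const _)
  have hsplit : ∫ ω, (φ (a + D ω) - φ a) ∂μ
      = ∫ ω, (φ' a * D ω + φ'' a * D ω ^ 2 / 2) ∂μ + ∫ ω, R ω ∂μ := by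
    rw [← integral_add hquad hRi]; congr 1 with ω; ring
  rw [hsplit, integral_add (hD.const_mul _) ((hD2.const_mul _).div_const _), integral_const_mul,
    integral_div, integral_const_mul, add_sub_cancel_left, ← integral_const_mul]
  exact norm_integral_le_of_norm_le (hDp.const_mul H) (ae_of_all _ hR)

variable {Y : Ω → ℝ}

lemma integral_const_add_mul_of_integral_eq_zero [IsProbabilityMeasure μ] (hY : Integrable Y μ)
    (hY0 : ∫ ω, Y ω ∂μ = 0) (c d : ℝ) : ∫ ω, (c + d * Y ω) ∂μ = c := by
  rw [integral_add (integrable_const c) (hY.const_mul d), integral_const_mul, hY0]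
  simp

lemma integral_const_add_mul_sq [IsProbabilityMeasure μ] (hY : Integrable Y μ)
    (hY0 : ∫ ω, Y ω ∂μ = 0) (hY2 : Integrable (fun ω => Y ω ^ 2) μ)
    (hY1 : ∫ ω, Y ω ^ 2 ∂μ = 1) (c d : ℝ) :
    ∫ ω, (c + d * Y ω) ^ 2 ∂μ = c ^ 2 + d ^ 2 := by
  have hexp : ∀ ω, (c + d * Y ω) ^ 2 = c ^ 2 + ((2 * c * d) * Y ω + d ^ 2 * Y ω ^ 2) :=
    fun ω => by ring
  have hlin : Integrable (fun ω => (2 * c * d) * Y ω + d ^ 2 * Y ω ^ 2) μ :=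
    (hY.const_mul _).add (hY2.const_mul _)
  simp_rw [hexp]
  rw [integral_add (integrable_const _) hlin,
    integral_add (hY.const_mul _) (hY2.const_mul _), integral_const_mul, integral_const_mul,
    hY0, hY1]
  simp

lemma integrable_abs_const_add_mul_rpow [IsProbabilityMeasure μ] {p : ℝ} (hp : 0 ≤ p)
    (hY : AEStronglyMeasurable Y μ) (hYp : Integrable (fun ω => |Y ω| ^ p) μ) (c d : ℝ) :
    Integrable (fun ω => |c + d * Y ω| ^ p) μ ∧
      ∫ ω, |c + d * Y ω| ^ p ∂μ ≤ 2 ^ p * (|c| ^ p + |d| ^ p * ∫ ω, |Y ω| ^ p ∂μ) := by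
  have hbound : ∀ ω, |c + d * Y ω| ^ p ≤ 2 ^ p * (|c| ^ p + |d| ^ p * |Y ω| ^ p) := fun ω => by
    simpa [abs_mul, Real.mul_rpow (abs_nonneg d) (abs_nonneg (Y ω))] using
      abs_add_rpow_le c (d * Y ω) hp
  have hdom : Integrable (fun ω => 2 ^ p * (|c| ^ p + |d| ^ p * |Y ω| ^ p)) μ :=
    ((integrable_const _).add (hYp.const_mul _)).const_mul _
  have hint : Integrable (fun ω => |c + d * Y ω| ^ p) μ :=
    have := hY.aemeasurable
    hdom.mono' (by fun_prop : AEMeasurable _ μ).aestronglyMeasurable (ae_of_all _ fun ω => by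
      simpa [abs_of_nonneg (Real.rpow_nonneg (abs_nonneg _) _)] using hbound ω)
  refine ⟨hint, (integral_mono hint hdom hbound).trans_eq ?_⟩
  rw [integral_const_mul, integral_add (integrable_const _) (hYp.const_mul _), integral_const_mul]
  simp

theorem abs_integral_affine_sub_taylor_two_le [IsProbabilityMeasure μ] {φ φ' φ'' : ℝ → ℝ}
    {H δ : ℝ} (hδ : 0 ≤ δ) (hφ : ∀ x, HasDerivAt φ (φ' x) x)
    (hφ' : ∀ x, HasDerivAt φ' (φ'' x) x) (hφ'' : ∀ x y, |φ'' x - φ'' y| ≤ H * |x - y| ^ δ)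
    (hY : Integrable Y μ) (hY0 : ∫ ω, Y ω ∂μ = 0) (hY2 : Integrable (fun ω => Y ω ^ 2) μ)
    (hY1 : ∫ ω, Y ω ^ 2 ∂μ = 1) (hYp : Integrable (fun ω => |Y ω| ^ (2 + δ)) μ) (a c d : ℝ) :
    |∫ ω, (φ (a + (c + d * Y ω)) - φ a) ∂μ - (φ' a * c + φ'' a * (c ^ 2 + d ^ 2) / 2)|
      ≤ H * (2 ^ (2 + δ) * (|c| ^ (2 + δ) + |d| ^ (2 + δ) * ∫ ω, |Y ω| ^ (2 + δ) ∂μ)) := by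
  have hH : 0 ≤ H := by simpa using (abs_nonneg _).trans (hφ'' 1 0)
  obtain ⟨hDp, hDp_le⟩ :=
    integrable_abs_const_add_mul_rpow (by positivity) hY.aestronglyMeasurable hYp c d
  have hYL2 : MemLp Y 2 μ := (memLp_two_iff_integrable_sq hY.aestronglyMeasurable).2 hY2
  have hD2 : Integrable (fun ω => (c + d * Y ω) ^ 2) μ :=
    ((memLp_const c).add (hYL2.const_mul d)).integrable_sq
  have := abs_integral_sub_taylor_two_le_of_holder (D := fun ω => c + d * Y ω) hδ hφ hφ' hφ''
    ((integrable_const c).add (hY.const_mul d)) hD2 hDp a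
  rw [integral_const_add_mul_of_integral_eq_zero hY hY0,
    integral_const_add_mul_sq hY hY0 hY2 hY1] at this
  exact this.trans (mul_le_mul_of_nonneg_left hDp_le hH)

theorem abs_integral_trade_sub_le [IsProbabilityMeasure μ] {φ φ' φ'' : ℝ → ℝ}
    {C H δ γ : ℝ} (hδ : δ ∈ Icc (0 : ℝ) 2) (hγ : 0 ≤ γ) (hφ : ∀ x, HasDerivAt φ (φ' x) x)
    (hφ' : ∀ x, HasDerivAt φ' (φ'' x) x) (hφ'' : ∀ x y, |φ'' x - φ'' y| ≤ H * |x - y| ^ δ)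
    (hC : ∀ x, |φ'' x| ≤ C)
    (hY : Integrable Y μ) (hY0 : ∫ ω, Y ω ∂μ = 0) (hY2 : Integrable (fun ω => Y ω ^ 2) μ)
    (hY1 : ∫ ω, Y ω ^ 2 ∂μ = 1) (hYp : Integrable (fun ω => |Y ω| ^ (2 + δ)) μ)
    {l : ℝ} (hl : l ∈ Ioo (0 : ℝ) 1) (w v : ℝ) :
    |∫ ω, (φ ((1 - l) * w + l * v + √(γ * l) * Y ω * w) - φ w) ∂μ
        - l * (φ' w * (v - w) + γ / 2 * (φ'' w * w ^ 2))|
      ≤ l ^ (1 + δ / 2) * ((2 * C + H * 2 ^ (2 + δ) *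
          (2 ^ (2 + δ) + γ ^ (1 + δ / 2) * ∫ ω, |Y ω| ^ (2 + δ) ∂μ)) *
          (1 + |w| ^ (2 + δ) + |v| ^ (2 + δ))) := by
  obtain ⟨hc2, hc, hd⟩ := trade_increment_rpow_le hδ hγ hl w v
  set p := 2 + δ
  set κ := 1 + δ / 2
  set ψ := 1 + |w| ^ p + |v| ^ p
  set c := l * (v - w) with hc_def
  set d := √(γ * l) * w
  have hH : 0 ≤ H := by simpa using (abs_nonneg _).trans (hφ'' 1 0)
  have hC0 : 0 ≤ C := (abs_nonneg _).trans (hC 0)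
  have hMY : 0 ≤ ∫ ω, |Y ω| ^ p ∂μ := integral_nonneg fun ω => by positivity
  have hexpansion :=
    abs_integral_affine_sub_taylor_two_le hδ.1 hφ hφ' hφ'' hY hY0 hY2 hY1 hYp w c d
  have htrade : ∀ ω, (1 - l) * w + l * v + √(γ * l) * Y ω * w = w + (c + d * Y ω) :=
    fun ω => by ring
  have hd2 : d ^ 2 = γ * l * w ^ 2 := by rw [mul_pow, Real.sq_sqrt (mul_nonneg hγ hl.1.le)]
  simp_rw [htrade]
  calc _ = |(∫ ω, (φ (w + (c + d * Y ω)) - φ w) ∂μ - (φ' w * c + φ'' w * (c ^ 2 + d ^ 2) / 2))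
          + φ'' w * (c ^ 2 / 2)| := by
          rw [hd2, hc_def]; congr 1; ring
    _ ≤ H * (2 ^ p * (|c| ^ p + |d| ^ p * ∫ ω, |Y ω| ^ p ∂μ)) + C * (c ^ 2 / 2) := by
        refine (abs_add_le _ _).trans (add_le_add hexpansion ?_)
        rw [abs_mul, abs_of_nonneg (by positivity : 0 ≤ c ^ 2 / 2)]
        exact mul_le_mul_of_nonneg_right (hC w) (by positivity)
    _ ≤ H * (2 ^ p * (l ^ κ * (2 ^ p * ψ) + γ ^ κ * (l ^ κ * ψ) * ∫ ω, |Y ω| ^ p ∂μ))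
          + C * (2 * (l ^ κ * ψ)) := by gcongr
    _ = _ := by ring

end RandomIncrement

section Convergence

variable {α : Type*} [MeasurableSpace α] {μ : Measure α}

lemma integrable_of_abs_sub_le {f g h : α → ℝ} (hf : AEStronglyMeasurable f μ)
    (hg : Integrable g μ) (hh : Integrable h μ) (hfg : ∀ x, |f x - g x| ≤ h x) :
    Integrable f μ :=
  ((hh.mono' (hf.sub hg.1) (ae_of_all _ hfg)).add hg).congr (ae_of_all _ fun x => by simp)

theorem tendsto_inv_mul_integral_of_abs_sub_le {F : ℝ → α → ℝ} {T ψ : α → ℝ} {κ : ℝ}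
    (hκ : 0 < κ) (hF : ∀ l ∈ Ioo (0 : ℝ) 1, Integrable (F l) μ) (hT : Integrable T μ)
    (hψ : Integrable ψ μ)
    (hFT : ∀ l ∈ Ioo (0 : ℝ) 1, ∀ x, |F l x - l * T x| ≤ l ^ (1 + κ) * ψ x) :
    Tendsto (fun l => 1 / l * ∫ x, F l x ∂μ) (𝓝[Ioo 0 1] 0) (𝓝 (∫ x, T x ∂μ)) := by
  have hbound : ∀ l ∈ Ioo (0 : ℝ) 1, ‖1 / l * ∫ x, F l x ∂μ - ∫ x, T x ∂μ‖
      ≤ l ^ κ * ∫ x, ψ x ∂μ := fun l hl => by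
    have hl0 : l ≠ 0 := hl.1.ne'
    calc ‖1 / l * ∫ x, F l x ∂μ - ∫ x, T x ∂μ‖
        = ‖l⁻¹ * ∫ x, (F l x - l * T x) ∂μ‖ := by
          rw [integral_sub (hF l hl) (hT.const_mul l), integral_const_mul]; field_simp
      _ = l⁻¹ * ‖∫ x, (F l x - l * T x) ∂μ‖ := by
          rw [norm_mul, Real.norm_of_nonneg (inv_nonneg.2 hl.1.le)]
      _ ≤ l⁻¹ * ∫ x, l ^ (1 + κ) * ψ x ∂μ :=
          mul_le_mul_of_nonneg_left (norm_integral_le_of_norm_le (hψ.const_mul _)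
            (ae_of_all _ (hFT l hl))) (inv_nonneg.2 hl.1.le)
      _ = l ^ κ * ∫ x, ψ x ∂μ := by
          rw [integral_const_mul, Real.rpow_add hl.1, Real.rpow_one]; field_simp
  have hlim : Tendsto (fun l : ℝ => l ^ κ * ∫ x, ψ x ∂μ) (𝓝[Ioo 0 1] 0) (𝓝 0) := by
    have := ((Real.continuousAt_rpow_const 0 κ (Or.inr hκ.le)).tendsto.mono_left
      (nhdsWithin_le_nhds (s := Ioo 0 1))).mul_const (∫ x, ψ x ∂μ)
    simpa [Real.zero_rpow hκ.ne'] using this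
  exact tendsto_iff_norm_sub_tendsto_zero.2
    (squeeze_zero_norm' (eventually_nhdsWithin_of_forall fun l hl => by
      simpa using hbound l hl) hlim)

end Convergence

lemma integrable_pow_of_integrable_abs_rpow {μ : Measure ℝ} [IsFiniteMeasure μ] {p : ℝ}
    {n : ℕ} (hn : n ≤ p) (h : Integrable (fun x => |x| ^ p) μ) :
    Integrable (fun x : ℝ => x ^ n) μ :=
  ((integrable_const 1).add h).mono' (by fun_prop) (ae_of_all _ fun x => by
    simpa [abs_pow] using abs_rpow_le_one_add_abs_rpow x (Nat.cast_nonneg n) hn)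

theorem integrable_and_integral_prod_drift_diffusion {g : Measure ℝ} [IsProbabilityMeasure g]
    {φ' φ'' : ℝ → ℝ} {C γ : ℝ} (hφ' : Continuous φ') (hφ'' : Measurable φ'')
    (hC : ∀ x, |φ' x| ≤ C ∧ |φ'' x| ≤ C) (hg1 : Integrable (fun w => w) g)
    (hg2 : Integrable (fun w => w ^ 2) g) :
    Integrable (fun z : ℝ × ℝ => φ' z.1 * (z.2 - z.1) + γ / 2 * (φ'' z.1 * z.1 ^ 2))
        (g.prod g) ∧
      ∫ z, (φ' z.1 * (z.2 - z.1) + γ / 2 * (φ'' z.1 * z.1 ^ 2)) ∂(g.prod g)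
        = -∫ w, φ' w * (w - ∫ w', w' ∂g) ∂g + γ / 2 * ∫ w, φ'' w * w ^ 2 ∂g := by
  set m := ∫ w', w' ∂g
  have hdrift : Integrable (fun w => φ' w * (w - m)) g :=
    (hg1.sub (integrable_const m)).bdd_mul hφ'.aestronglyMeasurable
      (ae_of_all _ fun w => (hC w).1)
  have hdiff : Integrable (fun w => φ'' w * w ^ 2) g :=
    hg2.bdd_mul hφ''.aestronglyMeasurable (ae_of_all _ fun w => (hC w).2)
  have hT : Integrable (fun z : ℝ × ℝ => φ' z.1 * (z.2 - z.1) + γ / 2 * (φ'' z.1 * z.1 ^ 2))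
      (g.prod g) :=
    (((hg1.comp_snd g).sub (hg1.comp_fst g)).bdd_mul
      (hφ'.comp continuous_fst).aestronglyMeasurable (ae_of_all _ fun z => (hC z.1).1)).add
      ((hdiff.comp_fst g).const_mul _)
  have hinner : ∀ w, ∫ v, (φ' w * (v - w) + γ / 2 * (φ'' w * w ^ 2)) ∂g
      = -(φ' w * (w - m)) + γ / 2 * (φ'' w * w ^ 2) := fun w => by
    have hlin : Integrable (fun v => φ' w * (v - w)) g :=
      (hg1.sub (integrable_const w)).const_mul _
    rw [integral_add hlin (integrable_const _), integral_const_mul,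
      integral_sub hg1 (integrable_const w)]
    simp only [integral_const, probReal_univ, one_smul]
    ring
  refine ⟨hT, ?_⟩
  rw [integral_prod _ hT]
  simp only [hinner]
  rw [integral_add (f := fun w => -(φ' w * (w - m))) hdrift.neg (hdiff.const_mul _),
    integral_neg, integral_const_mul]

theorem grazing_collision_limit_general (δ γ : ℝ) (hδ : δ ∈ Set.Ioc (0 : ℝ) 1) (hγ : 0 < γ)
    (g : Measure ℝ) [IsProbabilityMeasure g]
    (hg_mom : Integrable (fun w => |w| ^ (2 + δ)) g)
    {Ω : Type*} [MeasureSpace Ω] [IsProbabilityMeasure (ℙ : Measure Ω)]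
    (Y : Ω → ℝ) (hYmeas : Measurable Y)
    (hYint : Integrable Y ℙ) (hYmean : ∫ ω, Y ω ∂ℙ = 0)
    (hY2int : Integrable (fun ω => Y ω ^ 2) ℙ) (hYvar : ∫ ω, Y ω ^ 2 ∂ℙ = 1)
    (hYmom : Integrable (fun ω => |Y ω| ^ (2 + δ)) ℙ)
    (φ φ' φ'' : ℝ → ℝ)
    (hderiv1 : ∀ x, HasDerivAt φ (φ' x) x) (hderiv2 : ∀ x, HasDerivAt φ' (φ'' x) x)
    (C : ℝ) (hbound : ∀ x, |φ x| ≤ C ∧ |φ' x| ≤ C ∧ |φ'' x| ≤ C)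
    (H : ℝ) (hHolder : ∀ x y, |φ'' x - φ'' y| ≤ H * |x - y| ^ δ) :
    Tendsto (fun l : ℝ =>
        (1 / l) * ∫ w : ℝ, (∫ v : ℝ, (∫ ω : Ω,
          (φ ((1 - l) * w + l * v + Real.sqrt (γ * l) * Y ω * w) - φ w) ∂(ℙ : Measure Ω)) ∂g) ∂g)
      (𝓝[Set.Ioo (0 : ℝ) 1] 0)
      (𝓝 (-∫ w, φ' w * (w - ∫ w', w' ∂g) ∂g + (γ / 2) * ∫ w, φ'' w * w ^ 2 ∂g)) := by
  obtain ⟨hδ0, hδ1⟩ := hδ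
  have hφm : Measurable φ :=
    (continuous_iff_continuousAt.2 fun x => (hderiv1 x).continuousAt).measurable
  have hφ'c : Continuous φ' := continuous_iff_continuousAt.2 fun x => (hderiv2 x).continuousAt
  have hφ''m : Measurable φ'' := by
    rw [show φ'' = deriv φ' from funext fun x => (hderiv2 x).deriv.symm]
    exact measurable_deriv φ'
  obtain ⟨hT, hTL⟩ := integrable_and_integral_prod_drift_diffusion (γ := γ) hφ'c hφ''m
    (fun x => (hbound x).2)
    (by simpa using integrable_pow_of_integrable_abs_rpow (n := 1) (by simp; linarith) hg_mom)
    (integrable_pow_of_integrable_abs_rpow (n := 2) (by simp; linarith) hg_mom)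
  set K := 2 * C + H * 2 ^ (2 + δ) *
    (2 ^ (2 + δ) + γ ^ (1 + δ / 2) * ∫ ω, |Y ω| ^ (2 + δ) ∂(ℙ : Measure Ω))
  have hψ : Integrable (fun z : ℝ × ℝ => K * (1 + |z.1| ^ (2 + δ) + |z.2| ^ (2 + δ)))
      (g.prod g) :=
    (((integrable_const 1).add (hg_mom.comp_fst g)).add (hg_mom.comp_snd g)).const_mul K
  have hFT := fun l (hl : l ∈ Ioo (0 : ℝ) 1) (z : ℝ × ℝ) =>
    abs_integral_trade_sub_le ⟨hδ0.le, by linarith⟩ hγ.le hderiv1 hderiv2 hHolder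
      (fun x => (hbound x).2.2) hYint hYmean hY2int hYvar hYmom hl z.1 z.2
  have hFm (l : ℝ) : AEStronglyMeasurable (fun z : ℝ × ℝ => ∫ ω,
      (φ ((1 - l) * z.1 + l * z.2 + √(γ * l) * Y ω * z.1) - φ z.1) ∂(ℙ : Measure Ω)) (g.prod g) :=
    (by fun_prop : Measurable fun q : (ℝ × ℝ) × Ω =>
      φ ((1 - l) * q.1.1 + l * q.1.2 + √(γ * l) * Y q.2 * q.1.1) - φ q.1.1).stronglyMeasurable
      |>.integral_prod_right' |>.aestronglyMeasurable
  have hF := fun l hl =>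
    integrable_of_abs_sub_le (hFm l) (hT.const_mul l) (hψ.const_mul _) (hFT l hl)
  rw [← hTL]
  refine (tendsto_inv_mul_integral_of_abs_sub_le (half_pos hδ0) hF hT hψ hFT).congr' ?_
  filter_upwards [self_mem_nhdsWithin] with l hl
  rw [integral_prod _ (hF l hl)]

/-- The grazing (continuous trading) limit of the Cordier–Pareschi–Toscani collision
operator. Two agents with wealths `v, w` trade according to
`w* = (1-λ)w + λv + η_λ w` with `η_λ = √(γλ) Y`, `E[Y] = 0`, `E[Y²] = 1`. For a bounded
`C²` test function `φ` with bounded derivatives and `δ`-Hölder second derivative, and a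
wealth distribution `g` on `[0,∞)` with finite `(2+δ)`-th moment and mean `m`,
`(1/λ) E[∬ (φ(w*) - φ(w)) dg(v) dg(w)] → -∫ φ'(w)(w-m) dg(w) + (γ/2)∫ φ''(w) w² dg(w)`
as `λ → 0⁺`, i.e. the weak form of the Fokker–Planck operator
`∂_w((w-m)g) + (γ/2)∂²_w(w²g)`. -/
theorem grazing_collision_limit (δ γ : ℝ) (hδ : δ ∈ Set.Ioc (0 : ℝ) 1) (hγ : 0 < γ)
    (g : Measure ℝ) [IsProbabilityMeasure g] (hg_supp : g (Set.Ici (0 : ℝ)) = 1)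
    (hg_mom : Integrable (fun w => |w| ^ (2 + δ)) g)
    {Ω : Type*} [MeasureSpace Ω] [IsProbabilityMeasure (ℙ : Measure Ω)]
    (Y : Ω → ℝ) (hYmeas : Measurable Y)
    (hYint : Integrable Y ℙ) (hYmean : ∫ ω, Y ω ∂ℙ = 0)
    (hY2int : Integrable (fun ω => Y ω ^ 2) ℙ) (hYvar : ∫ ω, Y ω ^ 2 ∂ℙ = 1)
    (hYmom : Integrable (fun ω => |Y ω| ^ (2 + δ)) ℙ)
    (φ φ' φ'' : ℝ → ℝ)
    (hderiv1 : ∀ x, HasDerivAt φ (φ' x) x) (hderiv2 : ∀ x, HasDerivAt φ' (φ'' x) x)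
    (C : ℝ) (hbound : ∀ x, |φ x| ≤ C ∧ |φ' x| ≤ C ∧ |φ'' x| ≤ C)
    (H : ℝ) (hHolder : ∀ x y, |φ'' x - φ'' y| ≤ H * |x - y| ^ δ) :
    Tendsto (fun l : ℝ =>
        (1 / l) * ∫ w : ℝ, (∫ v : ℝ, (∫ ω : Ω,
          (φ ((1 - l) * w + l * v + Real.sqrt (γ * l) * Y ω * w) - φ w) ∂(ℙ : Measure Ω)) ∂g) ∂g)
      (𝓝[Set.Ioo (0 : ℝ) 1] 0)
      (𝓝 (-∫ w, φ' w * (w - ∫ w', w' ∂g) ∂g + (γ / 2) * ∫ w, φ'' w * w ^ 2 ∂g)) :=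
  grazing_collision_limit_general δ γ hδ hγ g hg_mom Y hYmeas hYint hYmean hY2int hYvar hYmom φ φ'
    φ'' hderiv1 hderiv2 C hbound H hHolder
end
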